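/- Let (V, ω₁), (W, ω₂), (U, ω₃) be finite-dimensional real symplectic vector spaces, L₁ ⊆ V̄ × W and L₂ ⊆ W̄ × U Lagrangian subspaces. If L₁ × L₂ is transverse to V̄ × Δ(W) × U inside V̄ × W × W̄ × U (i.e. their sum is the whole space), then the composition L₂ ∘ L₁ := {(v, u) : ∃ w ∈ W, (v, w) ∈ L₁ and (w, u) ∈ L₂} is a Lagrangian subspace of V̄ × U. -/

import Mathlib

/-- A subspace `L` of a real vector space with a bilinear form `ω` is Lagrangian
if it coincides with its symplectic orthogonal complement. -/
def IsLagrangian {V : Type*} [AddCommGroup V] [Module ℝ V]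
    (ω : V → V → ℝ) (L : Submodule ℝ V) : Prop :=
  ∀ v, v ∈ L ↔ ∀ u ∈ L, ω u v = 0

/-- The product symplectic form `ω₁ ⊕ ω₂` on `V × W`. -/
def prodForm {V W : Type*} (ω : V → V → ℝ) (η : W → W → ℝ) :
    V × W → V × W → ℝ := fun p q => ω p.1 q.1 + η p.2 q.2

/-- Composition of linear correspondences `L₁ ⊆ V × W` and `L₂ ⊆ W × U`:
`L₂ ∘ L₁ = {(v, u) : ∃ w, (v, w) ∈ L₁ ∧ (w, u) ∈ L₂}`. -/
def lagComp {V W U : Type*} [AddCommGroup V] [Module ℝ V] [AddCommGroup W] [Module ℝ W]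
    [AddCommGroup U] [Module ℝ U]
    (L₁ : Submodule ℝ (V × W)) (L₂ : Submodule ℝ (W × U)) : Submodule ℝ (V × U) where
  carrier := {p | ∃ w, (p.1, w) ∈ L₁ ∧ (w, p.2) ∈ L₂}
  zero_mem' := ⟨0, L₁.zero_mem, L₂.zero_mem⟩
  add_mem' := by
    rintro x y ⟨w, h1, h2⟩ ⟨w', h1', h2'⟩
    exact ⟨w + w', L₁.add_mem h1 h1', L₂.add_mem h2 h2'⟩
  smul_mem' := by
    rintro c x ⟨w, h1, h2⟩
    exact ⟨c • w, L₁.smul_mem c h1, L₂.smul_mem c h2⟩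

/-- The subspace `V × Δ(W) × U` of `(V × W) × (W × U)`, i.e. the pairs whose two
middle coordinates agree. -/
def midDiag (V W U : Type*) [AddCommGroup V] [Module ℝ V] [AddCommGroup W] [Module ℝ W]
    [AddCommGroup U] [Module ℝ U] : Submodule ℝ ((V × W) × (W × U)) where
  carrier := {p | p.1.2 = p.2.1}
  zero_mem' := rfl
  add_mem' := by
    intro x y hx hy
    exact congrArg₂ (· + ·) hx hy
  smul_mem' := by
    intro c x hx
    exact congrArg (c • ·) hx

/-!
`L₂ ∘ L₁` is the image of `(L₁ × L₂) ∩ (V × Δ(W) × U)` under the projection to `V × U`.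
Isotropy is inherited by adding the two vanishing pairings, the middle terms cancelling.
For coisotropy, a vector `(v, u)` orthogonal to `L₂ ∘ L₁` gives `((v, 0), (0, u))` orthogonal
to `(L₁ × L₂) ∩ (V × Δ(W) × U)`; in finite dimension the orthogonal of an intersection is the
sum of the orthogonals, and the orthogonal of `V × Δ(W) × U` is `0 × Δ(W) × 0`. Subtracting
its component leaves a vector of `L₁ × L₂` of the form `((v, -w), (-w, u))`.
-/

theorem LinearMap.SeparatingRight.neg {R M₁ M₂ M : Type*} [CommRing R]
    [AddCommGroup M₁] [Module R M₁] [AddCommGroup M₂] [Module R M₂]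
    [AddCommGroup M] [Module R M] {B : M₁ →ₗ[R] M₂ →ₗ[R] M} (hB : B.SeparatingRight) :
    (-B).SeparatingRight :=
  fun y hy => hB y fun x => neg_eq_zero.1 (hy x)

open LinearMap (BilinForm)

namespace LinearMap.BilinForm

section Prod

variable {R M₁ M₂ : Type*} [CommRing R] [AddCommGroup M₁] [Module R M₁]
  [AddCommGroup M₂] [Module R M₂]

def prod (B₁ : BilinForm R M₁) (B₂ : BilinForm R M₂) : BilinForm R (M₁ × M₂) :=
  B₁.comp (LinearMap.fst R M₁ M₂) (LinearMap.fst R M₁ M₂) +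
    B₂.comp (LinearMap.snd R M₁ M₂) (LinearMap.snd R M₁ M₂)

variable {B₁ : BilinForm R M₁} {B₂ : BilinForm R M₂}

@[simp]
theorem prod_apply (x y : M₁ × M₂) : B₁.prod B₂ x y = B₁ x.1 y.1 + B₂ x.2 y.2 := rfl

theorem prod_separatingRight (h₁ : B₁.SeparatingRight) (h₂ : B₂.SeparatingRight) :
    (B₁.prod B₂).SeparatingRight := fun y hy =>
  Prod.ext (h₁ y.1 fun x => by simpa using hy (x, 0))
    (h₂ y.2 fun x => by simpa using hy (0, x))

theorem orthogonal_prod (N₁ : Submodule R M₁) (N₂ : Submodule R M₂) :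
    (B₁.prod B₂).orthogonal (N₁.prod N₂) = (B₁.orthogonal N₁).prod (B₂.orthogonal N₂) := by
  ext y
  simp only [Submodule.mem_prod, mem_orthogonal_iff, prod_apply, Prod.forall]
  constructor
  · intro hy
    exact ⟨fun x hx => by simpa using hy x 0 ⟨hx, N₂.zero_mem⟩,
      fun x hx => by simpa using hy 0 x ⟨N₁.zero_mem, hx⟩⟩
  · rintro ⟨hy₁, hy₂⟩ x₁ x₂ ⟨hx₁, hx₂⟩
    rw [hy₁ x₁ hx₁, hy₂ x₂ hx₂, add_zero]

end Prod

theorem orthogonal_eq_comap_dualAnnihilator {R M : Type*} [CommRing R] [AddCommGroup M]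
    [Module R M] (B : BilinForm R M) (N : Submodule R M) :
    B.orthogonal N = N.dualAnnihilator.comap B.flip := by
  ext m
  simp [mem_orthogonal_iff, Submodule.mem_dualAnnihilator]

theorem orthogonal_inf_of_separatingRight {K E : Type*} [Field K] [AddCommGroup E] [Module K E]
    [FiniteDimensional K E] {B : BilinForm K E} (hB : B.SeparatingRight)
    (N₁ N₂ : Submodule K E) :
    B.orthogonal (N₁ ⊓ N₂) = B.orthogonal N₁ ⊔ B.orthogonal N₂ := by
  have hinj : Function.Injective B.flip :=
    LinearMap.ker_eq_bot.1 (separatingRight_iff_flip_ker_eq_bot.1 hB)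
  have hsurj : Function.Surjective B.flip :=
    (LinearMap.injective_iff_surjective_of_finrank_eq_finrank Subspace.dual_finrank_eq.symm).1 hinj
  have hrange : ∀ N : Submodule K (Module.Dual K E), N ≤ LinearMap.range B.flip := fun N =>
    (LinearMap.range_eq_top.2 hsurj).symm ▸ le_top
  simp only [orthogonal_eq_comap_dualAnnihilator, Subspace.dualAnnihilator_inf_eq]
  exact Submodule.comap_sup_of_injective hinj (hrange _) (hrange _)

end LinearMap.BilinForm

theorem isLagrangian_iff_orthogonal_eq {E : Type*} [AddCommGroup E] [Module ℝ E]
    (B : BilinForm ℝ E) (L : Submodule ℝ E) :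
    IsLagrangian (fun u v => B u v) L ↔ B.orthogonal L = L := by
  rw [eq_comm, SetLike.ext_iff]
  rfl

section Composition

open LinearMap.BilinForm

variable {V W U : Type*} [AddCommGroup V] [Module ℝ V] [AddCommGroup W] [Module ℝ W]
  [AddCommGroup U] [Module ℝ U] {α : BilinForm ℝ V} {β : BilinForm ℝ W} {γ : BilinForm ℝ U}
  {L₁ : Submodule ℝ (V × W)} {L₂ : Submodule ℝ (W × U)}

theorem lagComp_le_orthogonal (hL₁ : L₁ ≤ (α.prod β).orthogonal L₁)
    (hL₂ : L₂ ≤ ((-β).prod γ).orthogonal L₂) :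
    lagComp L₁ L₂ ≤ (α.prod γ).orthogonal (lagComp L₁ L₂) := by
  rintro p ⟨w, hp₁, hp₂⟩ q ⟨w', hq₁, hq₂⟩
  have h₁ : α q.1 p.1 + β w' w = 0 := hL₁ hp₁ (q.1, w') hq₁
  have h₂ : -β w' w + γ q.2 p.2 = 0 := hL₂ hp₂ (w', q.2) hq₂
  change α q.1 p.1 + γ q.2 p.2 = 0
  linarith

theorem eq_of_mem_orthogonal_midDiag (hα : α.SeparatingRight) (hβ : β.SeparatingRight)
    (hγ : γ.SeparatingRight) {z : (V × W) × (W × U)}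
    (hz : z ∈ ((α.prod β).prod ((-β).prod γ)).orthogonal (midDiag V W U)) :
    z = ((0, z.1.2), (z.1.2, 0)) := by
  have h₁ : z.1.1 = 0 := hα _ fun x => by simpa using hz ((x, 0), (0, 0)) rfl
  have h₂ : z.2.2 = 0 := hγ _ fun x => by simpa using hz ((0, 0), (0, x)) rfl
  have h₃ : z.1.2 - z.2.1 = 0 := hβ _ fun x => by
    simpa [sub_eq_add_neg] using hz ((0, x), (x, 0)) rfl
  exact Prod.ext (Prod.ext h₁ rfl) (Prod.ext (sub_eq_zero.1 h₃).symm h₂)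

theorem orthogonal_lagComp_le [FiniteDimensional ℝ V] [FiniteDimensional ℝ W]
    [FiniteDimensional ℝ U] (hα : α.SeparatingRight) (hβ : β.SeparatingRight)
    (hγ : γ.SeparatingRight) (hL₁ : (α.prod β).orthogonal L₁ ≤ L₁)
    (hL₂ : ((-β).prod γ).orthogonal L₂ ≤ L₂) :
    (α.prod γ).orthogonal (lagComp L₁ L₂) ≤ lagComp L₁ L₂ := by
  intro p hp
  set Ω := (α.prod β).prod ((-β).prod γ)
  have hΩ : Ω.SeparatingRight :=
    prod_separatingRight (prod_separatingRight hα hβ) (prod_separatingRight hβ.neg hγ)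
  have hz : ((p.1, 0), (0, p.2)) ∈ Ω.orthogonal (L₁.prod L₂ ⊓ midDiag V W U) := by
    rintro n ⟨⟨hn₁, hn₂⟩, hn⟩
    have hcomp : (n.1.1, n.2.2) ∈ lagComp L₁ L₂ := ⟨n.1.2, hn₁, (congrArg (·, n.2.2) hn) ▸ hn₂⟩
    simpa [Ω] using hp _ hcomp
  rw [orthogonal_inf_of_separatingRight hΩ, orthogonal_prod] at hz
  obtain ⟨y, ⟨hy₁, hy₂⟩, c, hc, hyc⟩ := Submodule.mem_sup.1 hz
  rw [eq_of_mem_orthogonal_midDiag hα hβ hγ hc, ← eq_sub_iff_add_eq] at hyc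
  subst hyc
  exact ⟨-c.1.2, by simpa using hL₁ hy₁, by simpa using hL₂ hy₂⟩

end Composition

theorem lagComp_isLagrangian_of_transverse_general
    {V W U : Type*} [AddCommGroup V] [Module ℝ V] [FiniteDimensional ℝ V]
    [AddCommGroup W] [Module ℝ W] [FiniteDimensional ℝ W]
    [AddCommGroup U] [Module ℝ U] [FiniteDimensional ℝ U]
    (ω₁ : V →ₗ[ℝ] V →ₗ[ℝ] ℝ) (ω₂ : W →ₗ[ℝ] W →ₗ[ℝ] ℝ) (ω₃ : U →ₗ[ℝ] U →ₗ[ℝ] ℝ)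
    (hnd₁ : ∀ v, (∀ u, ω₁ u v = 0) → v = 0)
    (hnd₂ : ∀ v, (∀ u, ω₂ u v = 0) → v = 0)
    (hnd₃ : ∀ v, (∀ u, ω₃ u v = 0) → v = 0)
    (L₁ : Submodule ℝ (V × W)) (L₂ : Submodule ℝ (W × U))
    (hL₁ : IsLagrangian (prodForm (fun u v => -(ω₁ u v)) (fun u v => ω₂ u v)) L₁)
    (hL₂ : IsLagrangian (prodForm (fun u v => -(ω₂ u v)) (fun u v => ω₃ u v)) L₂) :
    IsLagrangian (prodForm (fun u v => -(ω₁ u v)) (fun u v => ω₃ u v)) (lagComp L₁ L₂) := by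
  have h₁ : (BilinForm.prod (-ω₁) ω₂).orthogonal L₁ = L₁ :=
    (isLagrangian_iff_orthogonal_eq (BilinForm.prod (-ω₁) ω₂) L₁).1 hL₁
  have h₂ : (BilinForm.prod (-ω₂) ω₃).orthogonal L₂ = L₂ :=
    (isLagrangian_iff_orthogonal_eq (BilinForm.prod (-ω₂) ω₃) L₂).1 hL₂
  have hα : LinearMap.SeparatingRight (-ω₁) := LinearMap.SeparatingRight.neg (B := ω₁) hnd₁
  refine (isLagrangian_iff_orthogonal_eq (BilinForm.prod (-ω₁) ω₃) _).2 (le_antisymm ?_ ?_)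
  · exact orthogonal_lagComp_le hα hnd₂ hnd₃ h₁.le h₂.le
  · exact lagComp_le_orthogonal h₁.ge h₂.ge

/-- Transverse composition of Lagrangian correspondences is Lagrangian:
if `L₁ ⊆ V̄ × W` and `L₂ ⊆ W̄ × U` are Lagrangian and `L₁ × L₂` is transverse to
`V̄ × Δ(W) × U` inside `V̄ × W × W̄ × U`, then `L₂ ∘ L₁` is a Lagrangian subspace
of `V̄ × U`. -/
theorem lagComp_isLagrangian_of_transverse
    {V W U : Type*} [AddCommGroup V] [Module ℝ V] [FiniteDimensional ℝ V]
    [AddCommGroup W] [Module ℝ W] [FiniteDimensional ℝ W]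
    [AddCommGroup U] [Module ℝ U] [FiniteDimensional ℝ U]
    (ω₁ : V →ₗ[ℝ] V →ₗ[ℝ] ℝ) (ω₂ : W →ₗ[ℝ] W →ₗ[ℝ] ℝ) (ω₃ : U →ₗ[ℝ] U →ₗ[ℝ] ℝ)
    (halt₁ : ∀ v, ω₁ v v = 0) (hnd₁ : ∀ v, (∀ u, ω₁ u v = 0) → v = 0)
    (halt₂ : ∀ v, ω₂ v v = 0) (hnd₂ : ∀ v, (∀ u, ω₂ u v = 0) → v = 0)
    (halt₃ : ∀ v, ω₃ v v = 0) (hnd₃ : ∀ v, (∀ u, ω₃ u v = 0) → v = 0)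
    (L₁ : Submodule ℝ (V × W)) (L₂ : Submodule ℝ (W × U))
    (hL₁ : IsLagrangian (prodForm (fun u v => -(ω₁ u v)) (fun u v => ω₂ u v)) L₁)
    (hL₂ : IsLagrangian (prodForm (fun u v => -(ω₂ u v)) (fun u v => ω₃ u v)) L₂)
    (htrans : L₁.prod L₂ ⊔ midDiag V W U = ⊤) :
    IsLagrangian (prodForm (fun u v => -(ω₁ u v)) (fun u v => ω₃ u v)) (lagComp L₁ L₂) :=
  lagComp_isLagrangian_of_transverse_general ω₁ ω₂ ω₃ hnd₁ hnd₂ hnd₃ L₁ L₂ hL₁ hL₂
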